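/- Let μ be a probability measure on a measurable space Ω, and let f, g : Ω → ℝ be measurable functions satisfying a ≤ f(x) ≤ A and b ≤ g(x) ≤ B for all x ∈ Ω. Then |∫ f·g dμ − (∫ f dμ)(∫ g dμ)| ≤ (A − a)(B − b)/4. -/

import Mathlib

/-!
The left-hand side is the covariance of `f` and `g`. Cauchy–Schwarz in `L²` bounds its square by
`Var f · Var g`, and Popoviciu's inequality bounds the variances by `((A - a) / 2) ^ 2` and
`((B - b) / 2) ^ 2`.
-/

open MeasureTheory ProbabilityTheory

section

variable {Ω : Type*} [MeasurableSpace Ω] {μ : Measure Ω}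

lemma integral_mul_eq_inner_toLp {F G : Ω → ℝ} (hF : MemLp F 2 μ) (hG : MemLp G 2 μ) :
    ∫ x, F x * G x ∂μ = inner ℝ (hF.toLp F) (hG.toLp G) := by
  rw [L2.inner_def]
  refine integral_congr_ae ?_
  filter_upwards [hF.coeFn_toLp, hG.coeFn_toLp] with x hFx hGx
  simp [hFx, hGx, mul_comm]

lemma sq_integral_mul_le_integral_sq_mul_integral_sq {F G : Ω → ℝ}
    (hF : MemLp F 2 μ) (hG : MemLp G 2 μ) :
    (∫ x, F x * G x ∂μ) ^ 2 ≤ (∫ x, F x ^ 2 ∂μ) * ∫ x, G x ^ 2 ∂μ := by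
  simp only [sq, integral_mul_eq_inner_toLp hF hG, integral_mul_eq_inner_toLp hF hF,
    integral_mul_eq_inner_toLp hG hG]
  exact real_inner_mul_inner_self_le _ _

lemma sq_covariance_le_variance_mul_variance [IsFiniteMeasure μ] {X Y : Ω → ℝ}
    (hX : MemLp X 2 μ) (hY : MemLp Y 2 μ) :
    cov[X, Y; μ] ^ 2 ≤ Var[X; μ] * Var[Y; μ] := by
  rw [← covariance_self hX.aemeasurable, ← covariance_self hY.aemeasurable]
  simpa only [covariance, sq, Pi.sub_apply] using
    sq_integral_mul_le_integral_sq_mul_integral_sq (hX.sub (memLp_const μ[X]))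
      (hY.sub (memLp_const μ[Y]))

lemma abs_covariance_le_of_bounded [IsProbabilityMeasure μ] {X Y : Ω → ℝ} {a A b B : ℝ}
    (hXm : AEMeasurable X μ) (hYm : AEMeasurable Y μ)
    (hX : ∀ᵐ x ∂μ, X x ∈ Set.Icc a A) (hY : ∀ᵐ x ∂μ, Y x ∈ Set.Icc b B) :
    |cov[X, Y; μ]| ≤ (A - a) * (B - b) / 4 := by
  obtain ⟨x, ⟨hax, hxA⟩, ⟨hbx, hxB⟩⟩ := (hX.and hY).exists
  apply abs_le_of_sq_le_sq _ (by nlinarith)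
  calc cov[X, Y; μ] ^ 2
      ≤ Var[X; μ] * Var[Y; μ] := sq_covariance_le_variance_mul_variance
        (memLp_of_bounded hX hXm.aestronglyMeasurable 2)
        (memLp_of_bounded hY hYm.aestronglyMeasurable 2)
    _ ≤ ((A - a) / 2) ^ 2 * ((B - b) / 2) ^ 2 :=
        mul_le_mul (variance_le_sq_of_bounded hX hXm) (variance_le_sq_of_bounded hY hYm)
          (variance_nonneg _ _) (sq_nonneg _)
    _ = ((A - a) * (B - b) / 4) ^ 2 := by ring

end

/-- Grüss-type inequality: for a probability measure `μ` and bounded measurable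
functions `f, g` with `a ≤ f ≤ A` and `b ≤ g ≤ B`, one has
`|∫ f·g dμ − (∫ f dμ)(∫ g dμ)| ≤ (A − a)(B − b)/4`. -/
theorem gruss_inequality {Ω : Type*} [MeasurableSpace Ω] (μ : Measure Ω)
    [IsProbabilityMeasure μ] (f g : Ω → ℝ) (hf : Measurable f) (hg : Measurable g)
    (a A b B : ℝ) (hfa : ∀ x, a ≤ f x) (hfA : ∀ x, f x ≤ A)
    (hgb : ∀ x, b ≤ g x) (hgB : ∀ x, g x ≤ B) :
    |∫ x, f x * g x ∂μ - (∫ x, f x ∂μ) * (∫ x, g x ∂μ)| ≤ (A - a) * (B - b) / 4 := by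
  have hf_bdd : ∀ᵐ x ∂μ, f x ∈ Set.Icc a A := .of_forall fun x ↦ ⟨hfa x, hfA x⟩
  have hg_bdd : ∀ᵐ x ∂μ, g x ∈ Set.Icc b B := .of_forall fun x ↦ ⟨hgb x, hgB x⟩
  have hcov : cov[f, g; μ] = ∫ x, f x * g x ∂μ - (∫ x, f x ∂μ) * (∫ x, g x ∂μ) :=
    covariance_eq_sub (memLp_of_bounded hf_bdd hf.aestronglyMeasurable 2)
      (memLp_of_bounded hg_bdd hg.aestronglyMeasurable 2)
  rw [← hcov]
  exact abs_covariance_le_of_bounded hf.aemeasurable hg.aemeasurable hf_bdd hg_bdd
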